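/- arXiv:0812.0889 — 4 statements merged into one kernel-verified Lean document; each statement's English description precedes it below -/
import Mathlib

section
/- Let M be a Hilbert C*-module over a C*-algebra A satisfying condition [H]: every norm-bounded sequence (x_n) in M has a subsequence (x_{n_k}) and an element x_0 in M such that ⟨x_{n_k}, y⟩ converges in norm to ⟨x_0, y⟩ for every y in M. Then for every fixed y in M, the (anti-linear) map T_y : M → M defined by T_y(x) = ⟨y, x⟩·y is a compact operator, i.e., the image of every norm-bounded sequence under T_y has a norm-convergent subsequence. -/
open Filter Topology
open scoped RightActions

/-- The Hilbert C⋆-module class as Mathlib (December 2024) defined it: a *right* `A`-module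
(via `SMul Aᵐᵒᵖ E`) with an `A`-valued inner product linear in the second variable.
Mathlib's current `CStarModule` is a left module, so the old class is reproduced here. -/
class RightCStarModule (A E : Type*) [NonUnitalSemiring A] [StarRing A]
    [Module ℂ A] [AddCommGroup E] [Module ℂ E] [PartialOrder A] [SMul Aᵐᵒᵖ E] [Norm A] [Norm E]
    extends Inner A E where
  inner_add_right {x} {y} {z} : inner x (y + z) = inner x y + inner x z
  inner_self_nonneg {x} : 0 ≤ inner x x
  inner_self {x} : inner x x = 0 ↔ x = 0
  inner_op_smul_right {a : A} {x y : E} : inner x (y <• a) = inner x y * a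
  inner_smul_right_complex {z : ℂ} {x} {y} : inner x (z • y) = z • inner x y
  star_inner x y : star (inner x y) = inner y x
  norm_eq_sqrt_norm_inner_self x : ‖x‖ = √‖inner x x‖

/-! The map `T_y` factors as `x ↦ ⟪x, y⟫ ↦ star ⟪x, y⟫ = ⟪y, x⟫ ↦ y <• ⟪y, x⟫`, and each of these
maps is continuous (the last one is `‖y‖`-Lipschitz). Condition [H] makes `⟪x_{n_k}, y⟫`
converge, so the images of the subsequence converge as well. -/

namespace RightCStarModule

variable {A E : Type*} [NonUnitalNormedRing A] [StarRing A] [NormedSpace ℂ A] [PartialOrder A]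
  [NormedAddCommGroup E] [Module ℂ E] [SMul Aᵐᵒᵖ E] [RightCStarModule A E]

theorem inner_sub_right (x y z : E) : inner A x (y - z) = inner A x y - inner A x z :=
  eq_sub_of_add_eq (by rw [← inner_add_right, sub_add_cancel])

theorem inner_sub_left (x y z : E) : inner A (x - y) z = inner A x z - inner A y z := by
  rw [← star_inner z, inner_sub_right, star_sub, star_inner, star_inner]

theorem inner_op_smul_left (a : A) (x y : E) : inner A (x <• a) y = star a * inner A x y := by
  rw [← star_inner y, inner_op_smul_right, star_mul, star_inner]

theorem inner_self_op_smul_sub_op_smul (y : E) (a b : A) :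
    inner A (y <• a - y <• b) (y <• a - y <• b) = star (a - b) * (inner A y y * (a - b)) := by
  simp only [inner_sub_right, inner_sub_left, inner_op_smul_right, inner_op_smul_left, star_sub,
    sub_mul, mul_sub, mul_assoc]

-- The class does not make `y <• ·` additive, so `y <• a - y <• b` is estimated through its
-- inner square rather than rewritten as `y <• (a - b)`.
theorem norm_op_smul_sub_op_smul_le [NormedStarGroup A] (y : E) (a b : A) :
    ‖y <• a - y <• b‖ ≤ ‖y‖ * ‖a - b‖ := by
  have hsq : ‖y <• a - y <• b‖ ^ 2 ≤ (‖y‖ * ‖a - b‖) ^ 2 := calc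
    ‖y <• a - y <• b‖ ^ 2 = ‖star (a - b) * (inner A y y * (a - b))‖ := by
      rw [norm_eq_sqrt_norm_inner_self (A := A), Real.sq_sqrt (norm_nonneg _),
        inner_self_op_smul_sub_op_smul]
    _ ≤ ‖star (a - b)‖ * (‖inner A y y‖ * ‖a - b‖) :=
      (norm_mul_le _ _).trans (by gcongr; exact norm_mul_le _ _)
    _ = (‖y‖ * ‖a - b‖) ^ 2 := by
      rw [norm_star, norm_eq_sqrt_norm_inner_self (A := A) y, mul_pow,
        Real.sq_sqrt (norm_nonneg _)]
      ring
  exact (pow_le_pow_iff_left₀ (norm_nonneg _) (by positivity) two_ne_zero).mp hsq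

theorem lipschitzWith_op_smul [NormedStarGroup A] (y : E) :
    LipschitzWith ‖y‖₊ (fun a : A => y <• a) :=
  LipschitzWith.of_dist_le_mul fun a b => by
    simpa only [dist_eq_norm, coe_nnnorm] using norm_op_smul_sub_op_smul_le y a b

end RightCStarModule

theorem stmt0_general {A E : Type*} [NonUnitalNormedRing A] [StarRing A] [CStarRing A]
    [PartialOrder A] [NormedSpace ℂ A]
    [NormedAddCommGroup E] [Module ℂ E] [SMul Aᵐᵒᵖ E] [RightCStarModule A E]
    (hH : ∀ x : ℕ → E, (∃ C : ℝ, ∀ n, ‖x n‖ ≤ C) →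
      ∃ φ : ℕ → ℕ, StrictMono φ ∧ ∃ x₀ : E, ∀ y : E,
        Tendsto (fun k => ‖(inner A (x (φ k)) y : A) - inner A x₀ y‖) atTop (𝓝 0))
    (y : E) (x : ℕ → E) (hx : ∃ C : ℝ, ∀ n, ‖x n‖ ≤ C) :
    ∃ φ : ℕ → ℕ, StrictMono φ ∧ ∃ L : E,
      Tendsto (fun k => y <• (inner A y (x (φ k)) : A)) atTop (𝓝 L) := by
  obtain ⟨φ, hφ, x₀, hconv⟩ := hH x hx
  have hleft : Tendsto (fun k => inner A (x (φ k)) y) atTop (𝓝 (inner A x₀ y)) :=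
    tendsto_iff_norm_sub_tendsto_zero.mpr (hconv y)
  have hright : Tendsto (fun k => inner A y (x (φ k))) atTop (𝓝 (inner A y x₀)) := by
    simpa only [RightCStarModule.star_inner] using hleft.star
  exact ⟨φ, hφ, y <• inner A y x₀, ((RightCStarModule.lipschitzWith_op_smul y).continuous.tendsto _).comp hright⟩

/-- If a Hilbert C*-module `E` over a C*-algebra `A` satisfies condition [H]
(every norm-bounded sequence has a subsequence whose inner products against every `y`
converge in norm to those of some `x₀`), then for every `y` the map
`T_y : x ↦ ⟪y, x⟫ • y` is a compact operator: the image of every norm-bounded sequence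
has a norm-convergent subsequence. -/
theorem stmt0 {A E : Type*} [NonUnitalNormedRing A] [StarRing A] [CStarRing A]
    [PartialOrder A] [StarOrderedRing A] [NormedSpace ℂ A] [StarModule ℂ A]
    [NormedAddCommGroup E] [Module ℂ E] [SMul Aᵐᵒᵖ E] [RightCStarModule A E] [CompleteSpace E]
    (hH : ∀ x : ℕ → E, (∃ C : ℝ, ∀ n, ‖x n‖ ≤ C) →
      ∃ φ : ℕ → ℕ, StrictMono φ ∧ ∃ x₀ : E, ∀ y : E,
        Tendsto (fun k => ‖(inner A (x (φ k)) y : A) - inner A x₀ y‖) atTop (𝓝 0))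
    (y : E) (x : ℕ → E) (hx : ∃ C : ℝ, ∀ n, ‖x n‖ ≤ C) :
    ∃ φ : ℕ → ℕ, StrictMono φ ∧ ∃ L : E,
      Tendsto (fun k => y <• (inner A y (x (φ k)) : A)) atTop (𝓝 L) :=
  stmt0_general hH y x hx
end

section
/- Let H be a separable infinite-dimensional Hilbert space with orthonormal basis (ε_n), and regard the compact operators K(H) as a Hilbert C*-module over itself with inner product ⟨a, b⟩ = a b*. Let p_n denote the orthogonal projection onto span{ε_1, ..., ε_n}. Then there is no subsequence (p_{n_k}) and no compact operator a ∈ K(H) such that ‖p_{n_k} y* − a y*‖ → 0 for all y ∈ K(H). In particular, K(H) as a Hilbert C*-module over itself does not satisfy condition [H]. -/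
open Filter Topology

/-- The rank-one operator `e_{ξ,η} : ν ↦ (ν|η)ξ` on a Hilbert space. -/
noncomputable def rankOne {H : Type*} [NormedAddCommGroup H] [InnerProductSpace ℂ H]
    (ξ η : H) : H →L[ℂ] H :=
  (innerSL ℂ η).smulRight ξ

/-!
Testing `p_{n_k} y* → a y*` against the rank-one projections `y = e_{ε_i,ε_i}` shows that `a`
fixes every `ε_i`, since `p_n ε_i = ε_i` as soon as `n > i`. Hence `a` is the identity, and the
identity of an infinite-dimensional space is not compact.
-/

lemma rankOne_eq_innerProductSpace_rankOne {H : Type*} [NormedAddCommGroup H]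
    [InnerProductSpace ℂ H] (ξ η : H) : rankOne ξ η = InnerProductSpace.rankOne ℂ ξ η :=
  rfl

section

variable {𝕜 E F : Type*} [RCLike 𝕜] [NormedAddCommGroup E] [InnerProductSpace 𝕜 E]
  [NormedAddCommGroup F] [InnerProductSpace 𝕜 F]

open InnerProductSpace

lemma InnerProductSpace.isCompactOperator_rankOne (x : E) (y : F) :
    IsCompactOperator (rankOne 𝕜 x y) :=
  (isCompactOperator_of_locallyCompactSpace_dom (innerSL 𝕜 y)).clm_comp
    (ContinuousLinearMap.toSpanSingleton 𝕜 x)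

lemma Orthonormal.sum_rankOne_self_apply {ι : Type*} {e : ι → E} (he : Orthonormal 𝕜 e)
    {s : Finset ι} {i : ι} (hi : i ∈ s) :
    (∑ j ∈ s, rankOne 𝕜 (e j) (e j)) (e i) = e i := by
  classical
  simp [orthonormal_iff_ite.mp he, hi]

lemma apply_eq_self_of_tendsto_comp_rankOne {ι : Type*} {l : Filter ι} [l.NeBot]
    {f : ι → E →L[𝕜] E} {a : E →L[𝕜] E} {x : E} (hx : ‖x‖ = 1)
    (hfx : ∀ᶠ k in l, f k x = x)
    (hf : Tendsto (fun k => f k ∘L rankOne 𝕜 x x) l (𝓝 (a ∘L rankOne 𝕜 x x))) :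
    a x = x := by
  have hconst : ∀ᶠ k in l, f k ∘L rankOne 𝕜 x x = rankOne 𝕜 x x := by
    filter_upwards [hfx] with k hk
    rw [comp_rankOne, hk]
  have hax : a ∘L rankOne 𝕜 x x = rankOne 𝕜 x x :=
    tendsto_nhds_unique hf (tendsto_const_nhds.congr' (hconst.mono fun _ h => h.symm))
  simpa [inner_self_eq_norm_sq_to_K, hx] using congr($hax x)

namespace HilbertBasis

variable {ι : Type*}

lemma continuousLinearMap_ext (b : HilbertBasis ι 𝕜 E) {f g : E →L[𝕜] F}
    (h : ∀ i, f (b i) = g (b i)) : f = g :=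
  ContinuousLinearMap.ext_on (Submodule.dense_iff_topologicalClosure_eq_top.mpr b.dense_span)
    (Set.forall_mem_range.mpr h)

lemma not_isCompactOperator_id [Infinite ι] (b : HilbertBasis ι 𝕜 E) :
    ¬ IsCompactOperator (id : E → E) := fun h =>
  have := FiniteDimensional.of_isCompactOperator_id (𝕜 := 𝕜) h
  Module.Finite.not_linearIndependent_of_infinite _ b.orthonormal.linearIndependent

end HilbertBasis

end

/-- Let `H` be a separable infinite-dimensional Hilbert space with
orthonormal basis `(ε_n)`, and regard `K(H)` as a Hilbert C*-module over itself with
`⟪a, b⟫ = a b*`. With `p_n` the orthogonal projection onto `span{ε_1, …, ε_n}`, there is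
no subsequence `(p_{n_k})` and no compact operator `a` with `‖p_{n_k} y* − a y*‖ → 0` for
all compact `y`; in particular `K(H)` as a module over itself fails condition [H]. -/
theorem stmt1 {H : Type*} [NormedAddCommGroup H] [InnerProductSpace ℂ H] [CompleteSpace H]
    (ε : HilbertBasis ℕ ℂ H)
    (p : ℕ → H →L[ℂ] H) (hp : ∀ n, p n = ∑ i ∈ Finset.range n, rankOne (ε i) (ε i)) :
    ¬ ∃ φ : ℕ → ℕ, StrictMono φ ∧ ∃ a : H →L[ℂ] H, IsCompactOperator a ∧
      ∀ y : H →L[ℂ] H, IsCompactOperator y →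
        Tendsto
          (fun k => ‖p (φ k) ∘L ContinuousLinearMap.adjoint y
            - a ∘L ContinuousLinearMap.adjoint y‖) atTop (𝓝 0) := by
  rintro ⟨φ, hφ, a, ha, hconv⟩
  simp only [rankOne_eq_innerProductSpace_rankOne] at hp hconv
  have hfix : ∀ i, a (ε i) = ε i := fun i => by
    refine apply_eq_self_of_tendsto_comp_rankOne (l := atTop) (f := fun k => p (φ k))
      (ε.orthonormal.1 i) ?_ ?_
    · filter_upwards [eventually_gt_atTop i] with k hk
      rw [hp]
      exact ε.orthonormal.sum_rankOne_self_apply (Finset.mem_range.mpr (hk.trans_le hφ.le_apply))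
    · have := hconv _ (InnerProductSpace.isCompactOperator_rankOne (ε i) (ε i))
      rwa [InnerProductSpace.adjoint_rankOne, ← tendsto_iff_norm_sub_tendsto_zero] at this
  have ha_id : a = ContinuousLinearMap.id ℂ H := ε.continuousLinearMap_ext hfix
  exact ε.not_isCompactOperator_id (by simpa [ha_id] using ha)
end

section
/- Let H = ⊕_{n=1}^∞ H_n be a Hilbert space direct sum with unit vectors ε_n ∈ H_n, and let M'' = ⊕_{n=1}^∞ H_n (the Hilbert C*-module direct sum of the K(H_n)-modules H_n, i.e., sequences (ξ_n) with ξ_n ∈ H_n such that Σ e_{ξ_n,ξ_n} converges in K(H)). Set x_n = (ε_1, ..., ε_n, 0, 0, ...). Then there is no subsequence (x_{n_k}) and no x_0 = (ξ_1, ξ_2, ...) ∈ M'' such that ⟨x_{n_k}, y⟩ → ⟨x_0, y⟩ in operator norm for all y ∈ M''. Indeed, such convergence would force ξ_n = ε_n for all n, but the sequence (ε_1, ε_2, ...) does not define an element of M''. -/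
/-!
Testing against `y = Pi.single m ε_m`, the block-diagonal operator `⟪x_N, y⟫ - ⟪ξ, y⟫` has the
single nonzero block `e_{ε_m - ξ_m, ε_m}` once `N > m`, of norm `‖ε_m - ξ_m‖`. Convergence
therefore forces `ξ_m = ε_m` for every `m`, contradicting `‖ξ_m‖ → 0`.
-/

open Filter Topology

section RankOne

variable {H : Type*} [NormedAddCommGroup H] [InnerProductSpace ℂ H]

lemma rankOne_sub_left (a c b : H) : rankOne a b - rankOne c b = rankOne (a - c) b := by
  ext v; simp [rankOne, smul_sub]

lemma norm_rankOne (a b : H) : ‖rankOne a b‖ = ‖b‖ * ‖a‖ := by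
  rw [rankOne, ContinuousLinearMap.norm_smulRight_apply, innerSL_apply_norm]

end RankOne

section BlockDiagonal

variable {G : ℕ → Type*} [∀ n, NormedAddCommGroup (G n)]

lemma tendsto_norm_single_atTop (m : ℕ) (v : G m) :
    Tendsto (fun n => ‖(Pi.single m v : ∀ n, G n) n‖) atTop (𝓝 0) := by
  refine tendsto_const_nhds.congr' ?_
  filter_upwards [eventually_gt_atTop m] with n hn
  simp [Pi.single_eq_of_ne hn.ne']

variable [∀ n, InnerProductSpace ℂ (G n)]

lemma iSup_norm_rankOne_sub_rankOne_single (a b : ∀ n, G n) (m : ℕ) (v : G m) :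
    ⨆ n, ‖rankOne (a n) (Pi.single m v n) - rankOne (b n) (Pi.single m v n)‖
      = ‖v‖ * ‖a m - b m‖ := by
  simp_rw [rankOne_sub_left, norm_rankOne]
  refine ciSup_eq_of_forall_le_of_forall_lt_exists_gt (fun n => ?_) fun w hw => ⟨m, by simpa⟩
  rcases eq_or_ne n m with rfl | hn
  · simp
  · simp [Pi.single_eq_of_ne hn]; positivity

end BlockDiagonal

theorem stmt9_general {G : ℕ → Type*} [∀ n, NormedAddCommGroup (G n)]
    [∀ n, InnerProductSpace ℂ (G n)]
    (ε : ∀ n, G n) (hε : ∀ n, ‖ε n‖ = 1)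
    (X : ℕ → ∀ n, G n) (hX : ∀ N n, X N n = if n < N then ε n else 0) :
    ¬ ∃ φ : ℕ → ℕ, StrictMono φ ∧ ∃ ξ : ∀ n, G n,
        Tendsto (fun n => ‖ξ n‖) atTop (𝓝 0) ∧
        ∀ y : ∀ n, G n, Tendsto (fun n => ‖y n‖) atTop (𝓝 0) →
          Tendsto (fun k => ⨆ n, ‖rankOne (X (φ k) n) (y n) - rankOne (ξ n) (y n)‖)
            atTop (𝓝 0) := by
  rintro ⟨φ, hφ, ξ, hξ, hconv⟩
  have hξε : ∀ m, ξ m = ε m := fun m => by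
    have hconst : ∀ᶠ k in atTop, ⨆ n, ‖rankOne (X (φ k) n) (Pi.single m (ε m) n)
        - rankOne (ξ n) (Pi.single m (ε m) n)‖ = ‖ε m - ξ m‖ := by
      filter_upwards [eventually_gt_atTop m] with k hk
      rw [iSup_norm_rankOne_sub_rankOne_single, hε, one_mul, hX,
        if_pos (hk.trans_le hφ.le_apply)]
    have hlim := tendsto_nhds_unique tendsto_const_nhds
      ((hconv _ (tendsto_norm_single_atTop m (ε m))).congr' hconst)
    exact (sub_eq_zero.mp (norm_eq_zero.mp hlim)).symm
  have hone : Tendsto (fun _ : ℕ => (1 : ℝ)) atTop (𝓝 0) :=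
    hξ.congr fun n => by rw [hξε, hε]
  exact one_ne_zero (tendsto_nhds_unique tendsto_const_nhds hone)

/-- Let `H = ⊕_n H_n` with unit vectors `ε_n ∈ H_n` (each `H_n`
finite-dimensional), and let `M''` be the Hilbert C*-module direct sum of the
`K(H_n)`-modules `H_n`: its elements are sequences `(ξ_n)`, `ξ_n ∈ H_n`, whose inner
product `⟪(ξ_n), (η_n)⟫ = Σ_n e_{ξ_n,η_n}` is a compact (block-diagonal) operator,
equivalently `‖ξ_n‖ → 0`; the operator norm of a block-diagonal operator is the
supremum of the block norms. With `x_N = (ε_1, …, ε_N, 0, 0, …)`, there is no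
subsequence `(x_{N_k})` and no `x₀ = (ξ_n) ∈ M''` such that `⟪x_{N_k}, y⟫ → ⟪x₀, y⟫`
in operator norm for every `y ∈ M''`. -/
theorem stmt9 {G : ℕ → Type*} [∀ n, NormedAddCommGroup (G n)]
    [∀ n, InnerProductSpace ℂ (G n)] [∀ n, FiniteDimensional ℂ (G n)]
    (ε : ∀ n, G n) (hε : ∀ n, ‖ε n‖ = 1)
    (X : ℕ → ∀ n, G n) (hX : ∀ N n, X N n = if n < N then ε n else 0) :
    ¬ ∃ φ : ℕ → ℕ, StrictMono φ ∧ ∃ ξ : ∀ n, G n,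
        Tendsto (fun n => ‖ξ n‖) atTop (𝓝 0) ∧
        ∀ y : ∀ n, G n, Tendsto (fun n => ‖y n‖) atTop (𝓝 0) →
          Tendsto (fun k => ⨆ n, ‖rankOne (X (φ k) n) (y n) - rankOne (ξ n) (y n)‖)
            atTop (𝓝 0) :=
  stmt9_general ε hε X hX
end

section
/- Let A be the C*-algebra c_0 of complex sequences converging to 0 (with sup norm and pointwise operations), viewed as a Hilbert C*-module over itself via ⟨a, b⟩ = a·conj(b). Then A satisfies condition [H']: for each norm-bounded sequence (x_n) in A and each y ∈ A, there is a subsequence (x_{n_k}) such that (⟨x_{n_k}, y⟩) converges in norm. However, A does not satisfy condition [H]: there exists a norm-bounded sequence (x_n) in A such that no subsequence (x_{n_k}) and no x_0 ∈ A satisfy ⟨x_{n_k}, y⟩ → ⟨x_0, y⟩ for all y ∈ A. -/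
/-! For [H'], a bounded sequence in `c₀` lies in a product of countably many compact discs,
hence has a pointwise convergent subsequence `x_{n_k}`. Multiplying by a null sequence `y`
upgrades pointwise to uniform convergence: `y` is small off a finite set, and on that finite set
pointwise convergence is uniform. Hence `x_{n_k} y` is Cauchy in norm.

For [H], take `x_n = 1_{[0, n)}`. Testing against the point mass `δ_m` forces `x₀ m = 1` for
every `m`, which is impossible for `x₀ ∈ c₀`. -/

open Filter Topology
open scoped ZeroAtInfty

theorem exists_subseq_tendsto_apply_of_norm_le {α E : Type*} [Countable α] [NormedAddCommGroup E]
    [ProperSpace E] {f : ℕ → α → E} {C : ℝ} (hC : ∀ n m, ‖f n m‖ ≤ C) :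
    ∃ φ : ℕ → ℕ, StrictMono φ ∧ ∃ a : α → E, ∀ m, Tendsto (fun k => f (φ k) m) atTop (𝓝 (a m)) := by
  obtain ⟨a, -, φ, hφ, ha⟩ :=
    (isCompact_univ_pi fun _ : α => isCompact_closedBall (0 : E) C).tendsto_subseq
      (x := f) fun n m _ => mem_closedBall_zero_iff.2 (hC n m)
  exact ⟨φ, hφ, a, tendsto_pi_nhds.1 ha⟩

namespace ZeroAtInftyContinuousMap

variable {α E : Type*} [TopologicalSpace α] [NormedAddCommGroup E]

lemma norm_apply_le (f : C₀(α, E)) (m : α) : ‖f m‖ ≤ ‖f‖ :=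
  f.toBCF.norm_coe_le_norm m

lemma norm_le_of_forall_norm_apply_le {f : C₀(α, E)} {C : ℝ} (hC : 0 ≤ C) (h : ∀ m, ‖f m‖ ≤ C) :
    ‖f‖ ≤ C :=
  (BoundedContinuousFunction.norm_le (f := f.toBCF) hC).2 h

variable [DiscreteTopology α]

def ofFiniteSupport (f : α → E) (hf : f.support.Finite) : C₀(α, E) where
  toFun := f
  continuous_toFun := continuous_of_discreteTopology
  zero_at_infty' := by
    rw [cocompact_eq_cofinite]
    exact tendsto_nhds_of_eventually_eq (eventually_cofinite.2 hf)

@[simp] lemma ofFiniteSupport_apply (f : α → E) (hf : f.support.Finite) (m : α) :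
    ofFiniteSupport f hf m = f m := rfl

lemma finite_setOf_le_norm (f : C₀(α, E)) {η : ℝ} (hη : 0 < η) : {m | η ≤ ‖f m‖}.Finite := by
  have hf : Tendsto f cofinite (𝓝 0) := cocompact_eq_cofinite α ▸ f.zero_at_infty'
  simpa using eventually_cofinite.1 (hf.norm.eventually (gt_mem_nhds (by simpa using hη)))

variable {R : Type*} [NonUnitalNormedRing R]

theorem tendsto_mul_zero_of_tendsto_apply {ι : Type*} {l : Filter ι} {x : ι → C₀(α, R)} {C : ℝ}
    (hC : ∀ i, ‖x i‖ ≤ C) (hx : ∀ m, Tendsto (fun i => x i m) l (𝓝 0)) (y : C₀(α, R)) :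
    Tendsto (fun i => x i * y) l (𝓝 0) := by
  rw [NormedAddGroup.tendsto_nhds_zero]
  intro ε hε
  obtain ⟨η, hη, hCη⟩ : ∃ η > 0, (|C| + 1) * η = ε / 2 :=
    ⟨ε / 2 / (|C| + 1), by positivity, by field_simp⟩
  obtain ⟨δ, hδ, hyδ⟩ : ∃ δ > 0, δ * (‖y‖ + 1) = ε / 2 :=
    ⟨ε / 2 / (‖y‖ + 1), by positivity, by field_simp⟩
  have hhead : ∀ᶠ i in l, ∀ m ∈ {m | η ≤ ‖y m‖}, ‖x i m‖ < δ :=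
    (eventually_all_finite (y.finite_setOf_le_norm hη)).2 fun m _ =>
      (hx m).norm.eventually (gt_mem_nhds (by simpa using hδ))
  filter_upwards [hhead] with i hi
  refine (norm_le_of_forall_norm_apply_le (half_pos hε).le fun m => ?_).trans_lt (half_lt_self hε)
  refine (norm_mul_le (x i m) (y m)).trans ?_
  by_cases hm : η ≤ ‖y m‖
  · rw [← hyδ]
    exact mul_le_mul (hi m hm).le ((y.norm_apply_le m).trans (le_add_of_nonneg_right zero_le_one))
      (norm_nonneg _) hδ.le
  · rw [← hCη]
    exact mul_le_mul (((x i).norm_apply_le m).trans ((hC i).trans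
      ((le_abs_self C).trans (le_add_of_nonneg_right zero_le_one)))) (not_le.1 hm).le
      (norm_nonneg _) (by positivity)

theorem cauchySeq_mul_of_cauchySeq_apply {x : ℕ → C₀(α, R)} {C : ℝ} (hC : ∀ n, ‖x n‖ ≤ C)
    (hx : ∀ m, CauchySeq fun n => x n m) (y : C₀(α, R)) : CauchySeq fun n => x n * y := by
  rw [cauchySeq_iff_tendsto_dist_atTop_0]
  simp only [dist_eq_norm, ← sub_mul]
  rw [← tendsto_zero_iff_norm_tendsto_zero]
  refine tendsto_mul_zero_of_tendsto_apply (x := fun p : ℕ × ℕ => x p.1 - x p.2) (C := C + C)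
    (fun p => (norm_sub_le _ _).trans (add_le_add (hC p.1) (hC p.2))) (fun m => ?_) y
  have := cauchySeq_iff_tendsto_dist_atTop_0.1 (hx m)
  simp only [dist_eq_norm, ← tendsto_zero_iff_norm_tendsto_zero] at this
  simpa only [sub_apply] using this

end ZeroAtInftyContinuousMap

open ZeroAtInftyContinuousMap

/-- The C*-algebra `c₀ = C₀(ℕ, ℂ)` of complex null sequences, viewed as a
Hilbert C*-module over itself via `⟪a, b⟫ = a·conj b = a * star b`, satisfies condition
[H']: for each norm-bounded sequence `(x_n)` and each `y`, some subsequence of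
`(⟪x_{n_k}, y⟫)` converges in norm. However it does not satisfy condition [H]: there is
a norm-bounded sequence `(x_n)` such that no subsequence `(x_{n_k})` and no `x₀` satisfy
`⟪x_{n_k}, y⟫ → ⟪x₀, y⟫` for all `y`. -/
theorem stmt11 :
    (∀ x : ℕ → C₀(ℕ, ℂ), (∃ C : ℝ, ∀ n, ‖x n‖ ≤ C) → ∀ y : C₀(ℕ, ℂ),
      ∃ φ : ℕ → ℕ, StrictMono φ ∧ ∃ L : C₀(ℕ, ℂ),
        Tendsto (fun k => x (φ k) * star y) atTop (𝓝 L)) ∧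
    (∃ x : ℕ → C₀(ℕ, ℂ), (∃ C : ℝ, ∀ n, ‖x n‖ ≤ C) ∧
      ∀ φ : ℕ → ℕ, StrictMono φ → ∀ x₀ : C₀(ℕ, ℂ),
        ¬ ∀ y : C₀(ℕ, ℂ),
          Tendsto (fun k => x (φ k) * star y) atTop (𝓝 (x₀ * star y))) := by
  constructor
  · rintro x ⟨C, hC⟩ y
    obtain ⟨φ, hφ, a, ha⟩ := exists_subseq_tendsto_apply_of_norm_le (f := fun n m => x n m)
      fun n m => ((x n).norm_apply_le m).trans (hC n)
    exact ⟨φ, hφ, cauchySeq_tendsto_of_complete <|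
      cauchySeq_mul_of_cauchySeq_apply (fun k => hC (φ k)) (fun m => (ha m).cauchySeq) (star y)⟩
  · refine ⟨fun n => ofFiniteSupport ((Set.Iio n).indicator 1)
        ((Set.finite_Iio n).subset Set.support_indicator_subset),
      ⟨1, fun n => norm_le_of_forall_norm_apply_le zero_le_one fun m => ?_⟩, ?_⟩
    · simpa using norm_indicator_le_norm_self (1 : ℕ → ℂ) m
    intro φ hφ x₀ h
    obtain ⟨m, hm⟩ := (x₀.finite_setOf_le_norm one_pos).exists_notMem
    have hlim := (tendsto_iff_tendstoUniformly.1 (h (ofFiniteSupport (Pi.single m 1)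
      ((Set.finite_singleton m).subset Pi.support_single_subset)))).tendsto_at m
    simp only [mul_apply, star_apply, ofFiniteSupport_apply, Pi.single_eq_same, star_one,
      mul_one] at hlim
    have hone : ∀ᶠ k in atTop, (Set.Iio (φ k)).indicator (1 : ℕ → ℂ) m = 1 := by
      filter_upwards [hφ.tendsto_atTop.eventually_gt_atTop m] with k hk
      simp [hk]
    have hx₀m : x₀ m = 1 :=
      tendsto_nhds_unique hlim (tendsto_const_nhds.congr' (EventuallyEq.symm hone))
    simp [hx₀m] at hm
end
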